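/- arXiv:2110.05644 — 2 statements merged into one kernel-verified Lean document; each statement's English description precedes it below -/
import Mathlib

section
/- A square matrix M is non-degenerate (all principal minors nonzero) if and only if for every subset α ⊆ [n], the matrix B_α(M), whose j-th column is -M_{•j} for j ∈ α and e_j otherwise, is invertible. -/
/-- The principal submatrix of `M` indexed by the finite set `α`. -/
def principalSubmatrix {n : ℕ} (M : Matrix (Fin n) (Fin n) ℝ) (α : Finset (Fin n)) :
    Matrix α α ℝ :=
  M.submatrix (fun i => (i : Fin n)) (fun j => (j : Fin n))

/-- The matrix `B_α(M)` whose `j`-th column is `-M_{•j}` for `j ∈ α` and the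
standard basis vector `e_j` otherwise. -/
def Bmat {n : ℕ} (M : Matrix (Fin n) (Fin n) ℝ) (α : Finset (Fin n)) :
    Matrix (Fin n) (Fin n) ℝ :=
  fun i j => if j ∈ α then -M i j else if i = j then 1 else 0

lemma det_Bmat {n : ℕ} (M : Matrix (Fin n) (Fin n) ℝ) (α : Finset (Fin n)) :
    (Bmat M α).det = (-1) ^ α.card * (principalSubmatrix M α).det := by
  let e : {x : Fin n // x ∈ α} ⊕ {x : Fin n // x ∉ α} ≃ Fin n :=
    Equiv.sumCompl (· ∈ α)
  rw [← Matrix.det_submatrix_equiv_self e]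
  have h : (Bmat M α).submatrix e e =
      Matrix.fromBlocks (-(principalSubmatrix M α)) 0
        (fun (i : {x : Fin n // x ∉ α}) (j : {x : Fin n // x ∈ α}) => -M (i : Fin n) (j : Fin n)) 1 := by
    ext i j
    cases i with
    | inl i => cases j with
      | inl j => simp [e, Bmat, principalSubmatrix, Matrix.fromBlocks, j.2]
      | inr j =>
        have : (i : Fin n) ≠ (j : Fin n) := fun h => j.2 (h ▸ i.2)
        simp [e, Bmat, Matrix.fromBlocks, j.2, this]
    | inr i => cases j with
      | inl j => simp [e, Bmat, Matrix.fromBlocks, j.2]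
      | inr j =>
        simp [e, Bmat, Matrix.fromBlocks, j.2, Matrix.one_apply,
          Subtype.ext_iff]
        split_ifs <;> simp_all [Fin.ext_iff]
  rw [h]
  refine (Matrix.det_fromBlocks_zero₁₂ _ _ _).trans ?_
  rw [Matrix.det_one, mul_one, Matrix.det_neg,
    Fintype.card_coe]

theorem nondegenerate_iff_Bmat_invertible {n : ℕ} (M : Matrix (Fin n) (Fin n) ℝ) :
    (∀ α : Finset (Fin n), (principalSubmatrix M α).det ≠ 0) ↔
      ∀ α : Finset (Fin n), IsUnit (Bmat M α) := by
  refine forall_congr' fun α => ?_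
  rw [Matrix.isUnit_iff_isUnit_det, isUnit_iff_ne_zero, det_Bmat, mul_ne_zero_iff]
  have : ((-1 : ℝ)) ^ α.card ≠ 0 := pow_ne_zero _ (by norm_num)
  tauto
end

section
/- If there exists a nonzero vector x with x_i(Mx)_i ≤ 0 for all i, then there exists a subset α ⊆ [n] with det(M_{αα}) ≤ 0; in particular M is not a P-matrix. -/
open Matrix

lemma det_updateRow_single {m : Type*} [Fintype m] [DecidableEq m]
    (B : Matrix m m ℝ) (i : m) :
    (B.updateRow i (Pi.single i 1)).det
      = (B.submatrix (fun a : {j // j ≠ i} => (a : m)) (fun a : {j // j ≠ i} => (a : m))).det := by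
  classical
  set B' := B.updateRow i (Pi.single i 1) with hB'
  have key : B'.submatrix (Equiv.sumCompl (· = i)) (Equiv.sumCompl (· = i)) =
      fromBlocks ((fun _ _ => 1) : Matrix {j // j = i} {j // j = i} ℝ)
        (0 : Matrix {j // j = i} {j // ¬ j = i} ℝ)
        ((fun a _ => B (a : m) i) : Matrix {j // ¬ j = i} {j // j = i} ℝ)
        (B.submatrix (fun a : {j // ¬ j = i} => (a : m)) (fun a : {j // ¬ j = i} => (a : m))) := by
    ext a b
    cases a with
    | inl a =>
      cases b with
      | inl b =>
        simp only [submatrix_apply, Equiv.sumCompl_apply_inl, fromBlocks_apply₁₁]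
        rw [a.prop, b.prop, hB', updateRow_self, Pi.single_eq_same]
        rfl
      | inr b =>
        simp only [submatrix_apply, Equiv.sumCompl_apply_inl, Equiv.sumCompl_apply_inr,
          fromBlocks_apply₁₂, Matrix.zero_apply]
        rw [a.prop, hB', updateRow_self, Pi.single_eq_of_ne b.prop]
        rfl
    | inr a =>
      cases b with
      | inl b =>
        simp only [submatrix_apply, Equiv.sumCompl_apply_inl, Equiv.sumCompl_apply_inr,
          fromBlocks_apply₂₁]
        rw [b.prop, hB', updateRow_ne a.prop]
        rfl
      | inr b =>
        simp only [submatrix_apply, Equiv.sumCompl_apply_inr, fromBlocks_apply₂₂,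
          submatrix_apply]
        rw [hB', updateRow_ne a.prop]
        rfl
  have := det_submatrix_equiv_self (Equiv.sumCompl (· = i)) B'
  rw [key] at this
  rw [← this]
  erw [det_fromBlocks_zero₁₂]
  have h1 : Matrix.det ((fun _ _ => 1) : Matrix {j // j = i} {j // j = i} ℝ) = 1 := by
    haveI : Unique {j // j = i} := ⟨⟨⟨i, rfl⟩⟩, fun a => Subtype.ext a.prop⟩
    erw [det_unique]
  rw [h1, one_mul]
lemma pos_det_add_diagonal (N : ℕ) :
    ∀ {m : Type} [Fintype m] [DecidableEq m], Fintype.card m ≤ N →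
    ∀ (A : Matrix m m ℝ),
    (∀ (k : ℕ) (f : Fin k → m), Function.Injective f → 0 < (A.submatrix f f).det) →
    ∀ (d : m → ℝ), (∀ i, 0 ≤ d i) → 0 < (A + Matrix.diagonal d).det := by
  induction N with
  | zero =>
    intro m _ _ hcard A _ d _
    haveI : IsEmpty m := Fintype.card_eq_zero_iff.mp (Nat.le_zero.mp hcard)
    simp [Matrix.det_isEmpty]
  | succ N IH =>
    intro m _ _ hcard A hA d hd
    have H : ∀ (s : Finset m) (d : m → ℝ), (∀ i, 0 ≤ d i) → (∀ i ∉ s, d i = 0) →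
        0 < (A + Matrix.diagonal d).det := by
      intro s
      induction s using Finset.induction_on with
      | empty =>
        intro d hd h0
        have hdz : d = 0 := funext fun i => h0 i (Finset.notMem_empty i)
        subst hdz
        rw [show (0 : m → ℝ) = (fun _ => 0) from rfl, Matrix.diagonal_zero, add_zero]
        have := hA (Fintype.card m) (Fintype.equivFin m).symm (Equiv.injective _)
        rwa [← Matrix.det_submatrix_equiv_self (Fintype.equivFin m).symm A]
      | @insert i t hit IH2 =>
        intro d hd h0
        set d' := Function.update d i 0 with hd'def
        have hd' : ∀ j, 0 ≤ d' j := by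
          intro j
          by_cases hj : j = i
          · subst hj; simp [hd'def]
          · simpa [hd'def, Function.update_of_ne hj] using hd j
        have h0' : ∀ j ∉ t, d' j = 0 := by
          intro j hj
          by_cases hji : j = i
          · subst hji; simp [hd'def]
          · rw [hd'def, Function.update_of_ne hji]
            exact h0 j (by simp [hji, hj])
        set X := A + Matrix.diagonal d' with hX
        have hrow : A + Matrix.diagonal d = X.updateRow i (X i + d i • (Pi.single i (1:ℝ) : m → ℝ)) := by
          ext a b
          by_cases hab : a = i
          · subst hab
            rw [Matrix.updateRow_self]
            by_cases hb : b = a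
            · subst hb
              simp [hX, Matrix.add_apply, Matrix.diagonal_apply_eq, hd'def]
            · simp [hX, Matrix.add_apply, Matrix.diagonal_apply_ne' _ hb,
                Pi.single_eq_of_ne hb]
          · rw [Matrix.updateRow_ne hab]
            by_cases hb : a = b
            · subst hb
              simp [hX, Matrix.add_apply, Matrix.diagonal_apply_eq, hd'def,
                Function.update_of_ne hab]
            · simp [hX, Matrix.add_apply, Matrix.diagonal_apply_ne _ hb]
        rw [hrow, Matrix.det_updateRow_add, Matrix.det_updateRow_smul,
          Matrix.updateRow_eq_self]
        have h1 : 0 < X.det := IH2 d' hd' h0'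
        have hXsub : X.submatrix (fun a : {j // j ≠ i} => (a : m)) (fun a : {j // j ≠ i} => (a : m))
            = A.submatrix (fun a : {j // j ≠ i} => (a : m)) (fun a : {j // j ≠ i} => (a : m))
              + Matrix.diagonal (fun a : {j // j ≠ i} => d' (a : m)) := by
          ext a b
          by_cases hab : a = b
          · subst hab
            simp [hX, Matrix.add_apply, Matrix.diagonal_apply_eq]
          · have : (a : m) ≠ (b : m) := fun hc => hab (Subtype.ext hc)
            simp [hX, Matrix.add_apply, Matrix.diagonal_apply_ne _ hab,
              Matrix.diagonal_apply_ne _ this]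
        have hcard' : Fintype.card {j // j ≠ i} ≤ N := by
          have h1' : Fintype.card {j // j ≠ i} = Fintype.card m - 1 := by
            have := Fintype.card_subtype_compl (fun x => x = i) (α := m)
            simpa [Fintype.card_subtype_eq] using this
          omega
        have h2 : 0 < (X.updateRow i (Pi.single i 1)).det := by
          rw [det_updateRow_single, hXsub]
          refine IH hcard' _ ?_ _ (fun a => hd' _)
          intro k f hf
          rw [Matrix.submatrix_submatrix]
          exact hA k _ (Subtype.coe_injective.comp hf)
        exact add_pos_of_pos_of_nonneg h1 (mul_nonneg (hd i) h2.le)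
    exact H Finset.univ d hd (fun i hi => absurd (Finset.mem_univ i) hi)

/-- `M` is a P-matrix: all principal minors are strictly positive. -/
def IsPMatrix {n : ℕ} (M : Matrix (Fin n) (Fin n) ℝ) : Prop :=
  ∀ α : Finset (Fin n), 0 < (principalSubmatrix M α).det

theorem sign_reversing_to_nonpos_minor {n : ℕ} (M : Matrix (Fin n) (Fin n) ℝ)
    (x : Fin n → ℝ) (hx : x ≠ 0) (h : ∀ i, x i * M.mulVec x i ≤ 0) :
    (∃ α : Finset (Fin n), (principalSubmatrix M α).det ≤ 0) ∧ ¬ IsPMatrix M := by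
  classical
  have main : ∃ α : Finset (Fin n), (principalSubmatrix M α).det ≤ 0 := by
    by_contra hcon
    push_neg at hcon
    set α : Finset (Fin n) := Finset.univ.filter (fun i => x i ≠ 0) with hα
    set A : Matrix α α ℝ := principalSubmatrix M α with hAdef
    set x' : α → ℝ := fun i => x (i : Fin n) with hx'def
    have hmemx : ∀ i : α, x (i : Fin n) ≠ 0 := by
      intro i
      have hi : (i : Fin n) ∈ Finset.univ.filter (fun j => x j ≠ 0) := i.prop
      exact (Finset.mem_filter.mp hi).2
    have hx' : x' ≠ 0 := by
      obtain ⟨i, hi⟩ := Function.ne_iff.mp hx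
      have hi' : x i ≠ 0 := hi
      have hiα : i ∈ α := by simp [hα, hi']
      intro hc
      exact hi' (by simpa [hx'def] using congrFun hc ⟨i, hiα⟩)
    set d : α → ℝ := fun i => -(M.mulVec x (i : Fin n)) / x (i : Fin n) with hddef
    have hd : ∀ i, 0 ≤ d i := by
      intro i
      have hxi := hmemx i
      have hhi := h (i : Fin n)
      rcases lt_or_gt_of_ne hxi with hneg | hpos
      · have : 0 ≤ M.mulVec x (i : Fin n) := by nlinarith
        exact div_nonneg_iff.mpr (Or.inr ⟨by linarith, hneg.le⟩)
      · have : M.mulVec x (i : Fin n) ≤ 0 := by nlinarith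
        exact div_nonneg (by linarith) hpos.le
    -- the restricted vector is in the kernel of A + diagonal d
    have hmv : ∀ i : α, A.mulVec x' i = M.mulVec x (i : Fin n) := by
      intro i
      rw [Matrix.mulVec, Matrix.mulVec, dotProduct, dotProduct]
      have h1 : ∑ j : α, A i j * x' j = ∑ j ∈ α, M (i : Fin n) j * x j := by
        rw [← Finset.sum_coe_sort α (fun j => M (i : Fin n) j * x j)]
        rfl
      rw [h1]
      refine Finset.sum_subset (Finset.subset_univ _) ?_
      intro j _ hj
      have : x j = 0 := by
        by_contra hc
        exact hj (by simp [hα, hc])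
      simp [this]
    have hker : (A + Matrix.diagonal d).mulVec x' = 0 := by
      funext i
      rw [Matrix.add_mulVec]
      simp only [Pi.add_apply, Pi.zero_apply]
      rw [Matrix.mulVec_diagonal, hmv i]
      have hxi := hmemx i
      have hx'i : x' i = x (i : Fin n) := rfl
      rw [hddef, hx'i]
      field_simp
      ring
    have hdet0 : (A + Matrix.diagonal d).det = 0 :=
      Matrix.exists_mulVec_eq_zero_iff.mp ⟨x', hx', hker⟩
    have hpos : 0 < (A + Matrix.diagonal d).det := by
      refine pos_det_add_diagonal (Fintype.card α) le_rfl A ?_ d hd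
      intro k f hf
      set g : Fin k → Fin n := fun j => ((f j : α) : Fin n) with hgdef
      have hg : Function.Injective g := fun a b hab => hf (Subtype.ext hab)
      set β : Finset (Fin n) := Finset.image g Finset.univ with hβ
      have hmem : ∀ j, g j ∈ β := by intro j; simp [hβ]
      set eg : Fin k → {y // y ∈ β} := fun j => ⟨g j, hmem j⟩ with hegdef
      have heginj : Function.Injective eg := by
        intro a b hab
        have h2 : ((eg a : {y // y ∈ β}) : Fin n) = ((eg b : {y // y ∈ β}) : Fin n) :=
          congrArg Subtype.val hab
        exact hg h2
      have hegsurj : Function.Surjective eg := by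
        rintro ⟨y, hy⟩
        rw [hβ, Finset.mem_image] at hy
        obtain ⟨j, _, hj⟩ := hy
        exact ⟨j, Subtype.ext hj⟩
      set e : Fin k ≃ {y // y ∈ β} := Equiv.ofBijective eg ⟨heginj, hegsurj⟩ with hedef
      have heq : (principalSubmatrix M β).submatrix e e = A.submatrix f f := by
        ext a b
        rfl
      have := hcon β
      rw [← Matrix.det_submatrix_equiv_self e (principalSubmatrix M β), heq] at this
      exact this
    exact absurd hdet0 hpos.ne'
  refine ⟨main, ?_⟩
  intro hP
  obtain ⟨β, hβ⟩ := main
  exact absurd (hP β) (not_lt.mpr hβ)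
end
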